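/- Let N ≥ 2 and let ψ_1, …, ψ_N be unit vectors in ℂ^d with ⟨ψ_i, ψ_j⟩ = c for all i ≠ j, where c is real with 0 < c < 1. With γ1 = N⁻² Σ_k P_k ⊗ P_k and γ2 = N⁻² Σ_{k≠l} P_k ⊗ P_l as above, the commutator [γ2, γ2 γ1² γ2] vanishes; equivalently, the matrix γ2 (γ2 + γ1) γ1² γ2 is self-adjoint. -/

import Mathlib

open Matrix Kronecker

/-- The rank-one projection `ψ ψ†` onto the span of the unit vector `ψ k`. -/
noncomputable def projOf {d N : ℕ} (ψ : Fin N → Fin d → ℂ) (k : Fin N) :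
    Matrix (Fin d) (Fin d) ℂ :=
  Matrix.vecMulVec (ψ k) (star (ψ k))

/-- `γ1 = N⁻² ∑ k, P k ⊗ P k`, describing a pair of identical states. -/
noncomputable def gammaOne {d N : ℕ} (ψ : Fin N → Fin d → ℂ) :
    Matrix (Fin d × Fin d) (Fin d × Fin d) ℂ :=
  ((N : ℂ) ^ 2)⁻¹ • ∑ k, projOf ψ k ⊗ₖ projOf ψ k

/-- `γ2 = N⁻² ∑ k ≠ l, P k ⊗ P l`, describing a pair of distinct states. -/
noncomputable def gammaTwo {d N : ℕ} (ψ : Fin N → Fin d → ℂ) :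
    Matrix (Fin d × Fin d) (Fin d × Fin d) ℂ :=
  ((N : ℂ) ^ 2)⁻¹ • ∑ p ∈ Finset.univ.filter (fun p : Fin N × Fin N => p.1 ≠ p.2),
    projOf ψ p.1 ⊗ₖ projOf ψ p.2

/-!
Let `Ψ` be the `d × N` matrix with columns `ψ k` and `Y = Ψ ⊗ Ψ`, whose columns are the product
vectors `ψ k ⊗ ψ l`. Then `γ1 = N⁻² Y D Y†` and `γ2 = N⁻² Y O Y†`, where `D` and `O` are the
diagonal projections onto the diagonal and the off-diagonal index pairs, and `Y† Y = G ⊗ G` with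
`G = (1 - c) I + c J` the Gram matrix of the `ψ k`. Every product of `γ1`, `γ2` is therefore
`Y X Y†` for a coefficient matrix `X` in `O`, `D` and `K = G ⊗ G`, and the claim becomes
`O K Z = Z K O` for `Z = V K Vᵀ`, `V = O K D`. The computation behind it is that `O K` maps `V`
to `φ o δᵀ + w V` (with `o`, `δ` the indicator vectors of the two kinds of pairs) and that
`V K δ` is a multiple of `o`; hence `O K Z` is symmetric, which is the commutation.
-/

section Transpose
variable {R m n : Type*} [CommRing R] [Fintype m] [Fintype n]

theorem mul_mul_mul_transpose_comm_of_mul_eq {B : Matrix m m R} {V : Matrix m n R}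
    {K : Matrix n n R} {t : m → R} {u : n → R} {φ w μ : R} (hK : Kᵀ = K)
    (hBV : B * V = φ • vecMulVec t u + w • V) (hVKu : V *ᵥ (K *ᵥ u) = μ • t) :
    B * (V * K * Vᵀ) = V * K * Vᵀ * Bᵀ := by
  have hBZ : B * (V * K * Vᵀ) = (φ * μ) • vecMulVec t t + w • (V * K * Vᵀ) := by
    rw [← Matrix.mul_assoc, ← Matrix.mul_assoc, hBV, Matrix.add_mul, Matrix.add_mul,
      Matrix.smul_mul, Matrix.smul_mul, Matrix.smul_mul, vecMulVec_mul, vecMulVec_mul,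
      vecMul_transpose, ← mulVec_transpose, hK, hVKu, vecMulVec_smul, smul_smul, Matrix.smul_mul]
  have hZ : (V * K * Vᵀ)ᵀ = V * K * Vᵀ := by
    rw [transpose_mul, transpose_mul, transpose_transpose, hK, Matrix.mul_assoc]
  calc B * (V * K * Vᵀ) = (B * (V * K * Vᵀ))ᵀ := by
        rw [hBZ, transpose_add, transpose_smul, transpose_smul, transpose_vecMulVec, hZ]
    _ = V * K * Vᵀ * Bᵀ := by rw [transpose_mul, hZ]
end Transpose

section EquiangularGram
variable {R n : Type*} [CommRing R] [DecidableEq n] (c : R)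

def equiangularGram : Matrix n n R := of fun i j => if i = j then 1 else c

lemma equiangularGram_apply (i j : n) :
    equiangularGram c i j = if i = j then 1 else c := rfl

lemma equiangularGram_comm (i j : n) : equiangularGram c i j = equiangularGram c j i := by
  simp only [equiangularGram_apply, eq_comm]

lemma equiangularGram_transpose : (equiangularGram c : Matrix n n R)ᵀ = equiangularGram c := by
  ext i j; exact equiangularGram_comm c j i

def pairGram : Matrix (n × n) (n × n) R := equiangularGram c ⊗ₖ equiangularGram c

lemma pairGram_apply (p q : n × n) :
    pairGram c p q = equiangularGram c p.1 q.1 * equiangularGram c p.2 q.2 := rfl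

lemma pairGram_transpose : (pairGram c : Matrix (n × n) (n × n) R)ᵀ = pairGram c := by
  rw [pairGram, ← kroneckerMap_transpose, equiangularGram_transpose]

def diagIndicator (p : n × n) : R := if p.1 = p.2 then 1 else 0

def offDiagIndicator (p : n × n) : R := if p.1 = p.2 then 0 else 1

lemma offDiagIndicator_eq_one_sub (p : n × n) : (offDiagIndicator p : R) = 1 - diagIndicator p := by
  unfold offDiagIndicator diagIndicator; split_ifs <;> simp

variable [Fintype n]

lemma sum_equiangularGram_mul (i : n) (f : n → R) :
    ∑ j, equiangularGram c i j * f j = c * ∑ j, f j + (1 - c) * f i := by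
  have key : ∀ j, equiangularGram c i j * f j = c * f j + if i = j then (1 - c) * f i else 0 := by
    intro j
    rw [equiangularGram_apply]
    split_ifs with h
    · subst h; ring
    · ring
  simp only [key, Finset.sum_add_distrib, ← Finset.mul_sum, Finset.sum_ite_eq, Finset.mem_univ,
    if_true]

lemma sum_col_equiangularGram (k : n) :
    ∑ j, equiangularGram c j k = c * Fintype.card n + (1 - c) := by
  simpa [equiangularGram_comm c _ k] using sum_equiangularGram_mul c k 1

lemma equiangularGram_mul_self_apply (i k : n) :
    (equiangularGram c * equiangularGram c : Matrix n n R) i k =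
      c * (c * Fintype.card n + (1 - c)) + (1 - c) * equiangularGram c i k := by
  rw [mul_apply, sum_equiangularGram_mul, sum_col_equiangularGram]

lemma sum_equiangularGram_mul_mul {i i' : n} (h : i ≠ i') (f : n → R) :
    ∑ j, equiangularGram c i j * equiangularGram c i' j * f j =
      c ^ 2 * ∑ j, f j + c * (1 - c) * (f i + f i') := by
  simp only [mul_assoc]
  rw [sum_equiangularGram_mul, sum_equiangularGram_mul, equiangularGram_apply, if_neg h.symm]
  ring

lemma sum_equiangularGram_mul_self (k : n) :
    ∑ j, equiangularGram c k j * equiangularGram c k j =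
      c * (c * Fintype.card n + (1 - c)) + (1 - c) := by
  have h := equiangularGram_mul_self_apply c k k
  rw [mul_apply, equiangularGram_apply c k k, if_pos rfl, mul_one] at h
  rw [← h]
  exact Finset.sum_congr rfl fun j _ => by rw [equiangularGram_comm c j k]

lemma sum_mul_diagIndicator (f : n × n → R) : ∑ p, f p * diagIndicator p = ∑ k, f (k, k) := by
  simp [diagIndicator, Fintype.sum_prod_type]

lemma pairGram_mul_offDiag_mul_pairGram_apply {p : n × n} (hp : p.1 ≠ p.2) (k : n) :
    (pairGram c * diagonal offDiagIndicator * pairGram c : Matrix (n × n) (n × n) R) p (k, k) =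
      c ^ 2 * (1 + (Fintype.card n - 2) * c) * (2 + (Fintype.card n - 2) * c) +
        (1 - c) * (1 + (Fintype.card n - 3) * c) * pairGram c p (k, k) := by
  have hsplit :
      (pairGram c * diagonal offDiagIndicator * pairGram c : Matrix (n × n) (n × n) R) p (k, k) =
        (equiangularGram c * equiangularGram c : Matrix n n R) p.1 k *
            (equiangularGram c * equiangularGram c : Matrix n n R) p.2 k -
          ∑ j, equiangularGram c p.1 j * equiangularGram c p.2 j *
            (equiangularGram c j k * equiangularGram c j k) := by
    have hK : (pairGram c * pairGram c : Matrix (n × n) (n × n) R) =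
        (equiangularGram c * equiangularGram c) ⊗ₖ (equiangularGram c * equiangularGram c) :=
      (mul_kronecker_mul _ _ _ _).symm
    rw [mul_apply]
    simp only [mul_diagonal, offDiagIndicator_eq_one_sub, mul_sub, mul_one, sub_mul,
      Finset.sum_sub_distrib, mul_right_comm _ (diagIndicator _), sum_mul_diagIndicator]
    rw [← mul_apply, hK, kronecker_apply]
    simp only [pairGram_apply]
  have hcol : ∑ j, equiangularGram c j k * equiangularGram c j k =
      c * (c * Fintype.card n + (1 - c)) + (1 - c) := by
    simpa only [equiangularGram_comm c _ k] using sum_equiangularGram_mul_self c k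
  rw [hsplit, sum_equiangularGram_mul_mul c hp, hcol, equiangularGram_mul_self_apply,
    equiangularGram_mul_self_apply, pairGram_apply]
  obtain ⟨a, b⟩ := p
  simp only [equiangularGram_apply]
  -- only which of `a`, `b` equals `k` matters (at most one does, as `a ≠ b`)
  by_cases ha : a = k <;> by_cases hb : b = k <;> simp_all <;> ring

lemma offDiag_mul_pairGram_mul_offDiag_mul_pairGram_mul_diag :
    (diagonal offDiagIndicator * pairGram c *
        (diagonal offDiagIndicator * pairGram c * diagonal diagIndicator) :
        Matrix (n × n) (n × n) R) =
      (c ^ 2 * (1 + (Fintype.card n - 2) * c) * (2 + (Fintype.card n - 2) * c)) •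
          vecMulVec offDiagIndicator diagIndicator +
        ((1 - c) * (1 + (Fintype.card n - 3) * c)) •
          (diagonal offDiagIndicator * pairGram c * diagonal diagIndicator) := by
  have hassoc : (diagonal offDiagIndicator * pairGram c *
        (diagonal offDiagIndicator * pairGram c * diagonal diagIndicator) :
        Matrix (n × n) (n × n) R) =
      diagonal offDiagIndicator * (pairGram c * diagonal offDiagIndicator * pairGram c) *
        diagonal diagIndicator := by
    simp only [Matrix.mul_assoc]
  rw [hassoc]
  ext ⟨a, b⟩ ⟨k, k'⟩
  simp only [diagonal_mul, mul_diagonal, Matrix.add_apply, Matrix.smul_apply, vecMulVec_apply,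
    smul_eq_mul]
  by_cases hab : a = b
  · simp [offDiagIndicator, hab]
  by_cases hk : k = k'
  · subst hk
    rw [pairGram_mul_offDiag_mul_pairGram_apply c (p := (a, b)) hab k]
    simp [offDiagIndicator, diagIndicator, hab]
  · simp [diagIndicator, hk]

lemma offDiag_mul_pairGram_mul_diag_mulVec :
    (diagonal offDiagIndicator * pairGram c * diagonal diagIndicator :
        Matrix (n × n) (n × n) R) *ᵥ (pairGram c *ᵥ (diagIndicator : n × n → R)) =
      ((c * (c * Fintype.card n + (1 - c)) + (1 - c)) *
          (c ^ 2 * Fintype.card n + 2 * c * (1 - c))) • offDiagIndicator := by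
  have hdiag : ∀ k, (pairGram c *ᵥ (diagIndicator : n × n → R)) (k, k) =
      c * (c * Fintype.card n + (1 - c)) + (1 - c) := by
    intro k
    rw [mulVec, dotProduct, sum_mul_diagIndicator]
    exact sum_equiangularGram_mul_self c k
  ext ⟨a, b⟩
  rw [mulVec, dotProduct]
  simp only [mul_diagonal, diagonal_mul, mul_right_comm _ (diagIndicator _),
    sum_mul_diagIndicator, hdiag, Pi.smul_apply, smul_eq_mul]
  by_cases hab : a = b
  · simp [offDiagIndicator, hab]
  · simp only [offDiagIndicator, hab, if_false, one_mul, pairGram_apply, ← Finset.sum_mul]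
    have hrow := sum_equiangularGram_mul_mul c hab fun _ => 1
    simp only [mul_one, Finset.sum_const, Finset.card_univ, nsmul_eq_mul] at hrow
    rw [hrow]
    ring

theorem offDiag_mul_pairGram_mul_eq_mul_pairGram_mul_offDiag :
    (diagonal offDiagIndicator * pairGram c *
        (diagonal offDiagIndicator * pairGram c * diagonal diagIndicator * pairGram c *
          diagonal diagIndicator * pairGram c * diagonal offDiagIndicator) :
        Matrix (n × n) (n × n) R) =
      diagonal offDiagIndicator * pairGram c * diagonal diagIndicator * pairGram c *
          diagonal diagIndicator * pairGram c * diagonal offDiagIndicator *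
        (pairGram c * diagonal offDiagIndicator) := by
  have h := mul_mul_mul_transpose_comm_of_mul_eq (pairGram_transpose (n := n) c)
    (offDiag_mul_pairGram_mul_offDiag_mul_pairGram_mul_diag (n := n) c)
    (offDiag_mul_pairGram_mul_diag_mulVec (n := n) c)
  simpa only [transpose_mul, diagonal_transpose, pairGram_transpose, Matrix.mul_assoc] using h

end EquiangularGram

section ProductStates
variable {d N : ℕ} (ψ : Fin N → Fin d → ℂ)

def stateMatrix : Matrix (Fin d) (Fin N) ℂ := of fun a k => ψ k a

def pairStateMatrix : Matrix (Fin d × Fin d) (Fin N × Fin N) ℂ := stateMatrix ψ ⊗ₖ stateMatrix ψ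

lemma projOf_eq (k : Fin N) :
    projOf ψ k = stateMatrix ψ * single k k (1 : ℂ) * (stateMatrix ψ)ᴴ := by
  rw [single_eq_single_vecMulVec_single, mul_vecMulVec, vecMulVec_mul, mulVec_single_one,
    single_one_vecMul]
  rfl

lemma projOf_kronecker_projOf (k l : Fin N) :
    projOf ψ k ⊗ₖ projOf ψ l =
      pairStateMatrix ψ * single (k, l) (k, l) (1 : ℂ) * (pairStateMatrix ψ)ᴴ := by
  rw [projOf_eq, projOf_eq, mul_kronecker_mul, mul_kronecker_mul, single_kronecker_single,
    pairStateMatrix, conjTranspose_kronecker, one_mul]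

lemma gammaOne_eq : gammaOne ψ = ((N : ℂ) ^ 2)⁻¹ •
    (pairStateMatrix ψ * diagonal (diagIndicator : Fin N × Fin N → ℂ) * (pairStateMatrix ψ)ᴴ) := by
  have hdiag : ∑ k : Fin N, single (k, k) (k, k) (1 : ℂ) = diagonal diagIndicator := by
    rw [← sum_single_eq_diagonal, Fintype.sum_prod_type]
    simp [diagIndicator, apply_ite]
  simp only [gammaOne, projOf_kronecker_projOf]
  rw [← Matrix.sum_mul, ← Matrix.mul_sum, hdiag]

lemma gammaTwo_eq : gammaTwo ψ = ((N : ℂ) ^ 2)⁻¹ •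
    (pairStateMatrix ψ * diagonal (offDiagIndicator : Fin N × Fin N → ℂ) *
      (pairStateMatrix ψ)ᴴ) := by
  have hoff : ∑ p ∈ Finset.univ.filter (fun p : Fin N × Fin N => p.1 ≠ p.2), single p p (1 : ℂ) =
      diagonal offDiagIndicator := by
    rw [← sum_single_eq_diagonal, Finset.sum_filter]
    simp [offDiagIndicator, apply_ite]
  simp only [gammaTwo, projOf_kronecker_projOf, Prod.mk.eta]
  rw [← Matrix.sum_mul, ← Matrix.mul_sum, hoff]

lemma conjTranspose_stateMatrix_mul_self (c : ℝ) (hnorm : ∀ k, star (ψ k) ⬝ᵥ ψ k = 1)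
    (hoverlap : ∀ i j, i ≠ j → star (ψ i) ⬝ᵥ ψ j = (c : ℂ)) :
    (stateMatrix ψ)ᴴ * stateMatrix ψ = equiangularGram (c : ℂ) := by
  ext i j
  rw [equiangularGram_apply]
  split_ifs with h
  · subst h; rw [← hnorm i]; rfl
  · rw [← hoverlap i j h]; rfl

lemma conjTranspose_pairStateMatrix_mul_self (c : ℝ) (hnorm : ∀ k, star (ψ k) ⬝ᵥ ψ k = 1)
    (hoverlap : ∀ i j, i ≠ j → star (ψ i) ⬝ᵥ ψ j = (c : ℂ)) :
    (pairStateMatrix ψ)ᴴ * pairStateMatrix ψ = pairGram (c : ℂ) := by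
  rw [pairStateMatrix, conjTranspose_kronecker, ← mul_kronecker_mul,
    conjTranspose_stateMatrix_mul_self ψ c hnorm hoverlap, pairGram]

lemma gammaOne_isHermitian : (gammaOne ψ).IsHermitian := by
  rw [gammaOne_eq]
  refine (isHermitian_mul_mul_conjTranspose _ (isHermitian_diagonal_of_self_adjoint _ ?_)).smul ?_
  · ext p; simp [diagIndicator, apply_ite]
  · simp [isSelfAdjoint_iff]

lemma gammaTwo_isHermitian : (gammaTwo ψ).IsHermitian := by
  rw [gammaTwo_eq]
  refine (isHermitian_mul_mul_conjTranspose _ (isHermitian_diagonal_of_self_adjoint _ ?_)).smul ?_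
  · ext p; simp [offDiagIndicator, apply_ite]
  · simp [isSelfAdjoint_iff]

lemma gammaTwo_commute_gammaTwo_mul_gammaOne_sq_mul_gammaTwo (c : ℝ)
    (hnorm : ∀ k, star (ψ k) ⬝ᵥ ψ k = 1) (hoverlap : ∀ i j, i ≠ j → star (ψ i) ⬝ᵥ ψ j = (c : ℂ)) :
    Commute (gammaTwo ψ) (gammaTwo ψ * gammaOne ψ ^ 2 * gammaTwo ψ) := by
  have hsandwich : ∀ A B : Matrix (Fin N × Fin N) (Fin N × Fin N) ℂ,
      pairStateMatrix ψ * A * (pairStateMatrix ψ)ᴴ *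
          (pairStateMatrix ψ * B * (pairStateMatrix ψ)ᴴ) =
        pairStateMatrix ψ * (A * pairGram (c : ℂ) * B) * (pairStateMatrix ψ)ᴴ := by
    intro A B
    rw [← conjTranspose_pairStateMatrix_mul_self ψ c hnorm hoverlap]
    simp only [Matrix.mul_assoc]
  rw [gammaOne_eq, gammaTwo_eq, smul_pow, smul_mul_smul_comm, smul_mul_smul_comm]
  refine (Commute.smul_right ?_ _).smul_left _
  simp only [Commute, SemiconjBy, pow_two, hsandwich]
  congr 2
  simpa only [Matrix.mul_assoc] using offDiag_mul_pairGram_mul_eq_mul_pairGram_mul_offDiag (c : ℂ)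

end ProductStates

theorem commutator_gamma2_g2g1sqg2_general (d N : ℕ) (ψ : Fin N → Fin d → ℂ)
    (hnorm : ∀ k, star (ψ k) ⬝ᵥ ψ k = 1)
    (c : ℝ)
    (hoverlap : ∀ i j, i ≠ j → star (ψ i) ⬝ᵥ ψ j = (c : ℂ)) :
    gammaTwo ψ * (gammaTwo ψ * gammaOne ψ ^ 2 * gammaTwo ψ) =
        (gammaTwo ψ * gammaOne ψ ^ 2 * gammaTwo ψ) * gammaTwo ψ ∧
      (gammaTwo ψ * (gammaTwo ψ + gammaOne ψ) * gammaOne ψ ^ 2 * gammaTwo ψ).IsHermitian := by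
  have hcomm := gammaTwo_commute_gammaTwo_mul_gammaOne_sq_mul_gammaTwo ψ c hnorm hoverlap
  have h1 := gammaOne_isHermitian ψ
  have h2 := gammaTwo_isHermitian ψ
  have hsym : ∀ A, A.IsHermitian → (gammaTwo ψ * A * gammaTwo ψ).IsHermitian := fun A hA => by
    simpa only [h2.eq] using isHermitian_mul_mul_conjTranspose (gammaTwo ψ) hA
  refine ⟨hcomm.eq, ?_⟩
  have hsplit : gammaTwo ψ * (gammaTwo ψ + gammaOne ψ) * gammaOne ψ ^ 2 * gammaTwo ψ =
      gammaTwo ψ * (gammaTwo ψ * gammaOne ψ ^ 2 * gammaTwo ψ) +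
        gammaTwo ψ * gammaOne ψ ^ 3 * gammaTwo ψ := by
    noncomm_ring
  rw [hsplit]
  exact ((h2.commute_iff (hsym _ (h1.pow 2))).mp hcomm).add (hsym _ (h1.pow 3))

/-- For the state-comparison operators, the commutator `[γ2, γ2 γ1² γ2]` vanishes;
equivalently, `γ2 (γ2 + γ1) γ1² γ2` is self-adjoint. -/
theorem commutator_gamma2_g2g1sqg2 (d N : ℕ) (hN : 2 ≤ N) (ψ : Fin N → Fin d → ℂ)
    (hnorm : ∀ k, star (ψ k) ⬝ᵥ ψ k = 1)
    (c : ℝ) (hc0 : 0 < c) (hc1 : c < 1)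
    (hoverlap : ∀ i j, i ≠ j → star (ψ i) ⬝ᵥ ψ j = (c : ℂ)) :
    gammaTwo ψ * (gammaTwo ψ * gammaOne ψ ^ 2 * gammaTwo ψ) =
        (gammaTwo ψ * gammaOne ψ ^ 2 * gammaTwo ψ) * gammaTwo ψ ∧
      (gammaTwo ψ * (gammaTwo ψ + gammaOne ψ) * gammaOne ψ ^ 2 * gammaTwo ψ).IsHermitian :=
  commutator_gamma2_g2g1sqg2_general d N ψ hnorm c hoverlap
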